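/- arXiv:2209.13213 — 2 statements merged into one kernel-verified Lean document; each statement's English description precedes it below -/
import Mathlib

section
/- Assume the standing assumptions. Then (as cardinals, Module.rank over ℂ): dim ker(U − a·I) = dim ker(T − I), dim ker(U + a·I) = dim ker(T + I), dim ker(U + b·I) = dim(ker d ∩ ker(S + I)), and dim ker(U − b·I) = dim(ker d ∩ ker(S − I)). -/
/-!
Write `P = d† d`, a projection since `d d† = 1`, so that `C = a P + b (1 - P)`.
If `U x = a x` then `C x = a S x`, i.e. `(a - b) P x = a S x - b x`; applying `d` and `S` to
this identity shows that `d x` is fixed by `T = d S d†` and that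
`(a + b) x = b d† (d x) + a S d† (d x)`.
Conversely, the right-hand side turns a fixed vector `u` of `T` into an eigenvector of `U` for `a`,
so `d` restricts to an isomorphism `ker (U - a) ≃ ker (T - 1)`; this part is pure linear algebra.
If `U x = -b x`, then `S` fixes `P x`, and pairing `(a - b) P x = -b (S x + x)` with `P x` gives
`(a + b) ‖d x‖² = 0`, hence `d x = 0` and `S x = -x`.
Replacing `S` by `-S` gives the other two identities.
-/

universe u v

namespace QuantumWalk

open LinearMap
open scoped InnerProductSpace

section Field

variable {𝕜 : Type*} {V : Type u} {W : Type v} [Field 𝕜]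
  [AddCommGroup V] [Module 𝕜 V] [AddCommGroup W] [Module 𝕜 W]
  {d : V →ₗ[𝕜] W} {e : W →ₗ[𝕜] V} {S : V →ₗ[𝕜] V} {a b c : 𝕜}

def coin (d : V →ₗ[𝕜] W) (e : W →ₗ[𝕜] V) (a b : 𝕜) : Module.End 𝕜 V :=
  a • (e ∘ₗ d) + b • (1 - e ∘ₗ d)

def walk (d : V →ₗ[𝕜] W) (e : W →ₗ[𝕜] V) (S : V →ₗ[𝕜] V) (a b : 𝕜) :
    Module.End 𝕜 V :=
  S ∘ₗ coin d e a b

def discriminant (d : V →ₗ[𝕜] W) (e : W →ₗ[𝕜] V) (S : V →ₗ[𝕜] V) :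
    Module.End 𝕜 W :=
  d ∘ₗ S ∘ₗ e

def liftMap (e : W →ₗ[𝕜] V) (S : V →ₗ[𝕜] V) (a b : 𝕜) : W →ₗ[𝕜] V :=
  b • e + a • (S ∘ₗ e)

@[simp]
theorem coin_apply (x : V) : coin d e a b x = a • e (d x) + b • (x - e (d x)) := rfl

@[simp]
theorem walk_apply (x : V) : walk d e S a b x = S (coin d e a b x) := rfl

@[simp]
theorem discriminant_apply (u : W) : discriminant d e S u = d (S (e u)) := rfl

@[simp]
theorem liftMap_apply (u : W) : liftMap e S a b u = b • e u + a • S (e u) := rfl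

theorem walk_neg : walk d e (-S) a b = -walk d e S a b :=
  LinearMap.neg_comp _ _

theorem discriminant_neg : discriminant d e (-S) = -discriminant d e S := by
  rw [discriminant, discriminant, LinearMap.neg_comp, LinearMap.comp_neg]

theorem mem_ker_sub_smul_one {f : Module.End 𝕜 V} {x : V} :
    x ∈ ker (f - c • 1) ↔ f x = c • x := by
  rw [← Module.End.eigenspace_def, Module.End.mem_eigenspace_iff]

theorem mem_ker_sub_one {f : Module.End 𝕜 V} {x : V} : x ∈ ker (f - 1) ↔ f x = x := by
  simp [sub_eq_zero]

theorem mem_ker_add_smul_one {f : Module.End 𝕜 V} {x : V} :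
    x ∈ ker (f + c • 1) ↔ f x = -c • x := by
  rw [← sub_neg_eq_add, ← neg_smul, mem_ker_sub_smul_one]

theorem mem_ker_add_one {f : Module.End 𝕜 V} {x : V} : x ∈ ker (f + 1) ↔ f x = -x := by
  simp [add_eq_zero_iff_eq_neg]

section Involution

variable (hS : Function.Involutive S)
include hS

theorem sub_smul_proj_eq_of_walk_eq {x : V} (hx : walk d e S a b x = c • x) :
    (a - b) • e (d x) = c • S x - b • x := by
  have hcoin : coin d e a b x = c • S x := by rw [← map_smul, ← hx, walk_apply, hS]
  rw [← hcoin, coin_apply]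
  module

theorem sub_smul_involution_proj_eq_of_walk_eq {x : V} (hx : walk d e S a b x = c • x) :
    (a - b) • S (e (d x)) = c • x - b • S x := by
  rw [← map_smul, sub_smul_proj_eq_of_walk_eq hS hx, map_sub, map_smul, map_smul, hS]

theorem liftMap_map_eq_of_walk_eq (hab : a ≠ b) {x : V} (hx : walk d e S a b x = a • x) :
    liftMap e S a b (d x) = (a + b) • x := by
  refine smul_right_injective V (sub_ne_zero.mpr hab) ?_
  simp only [liftMap_apply]
  linear_combination (norm := module) b • sub_smul_proj_eq_of_walk_eq hS hx +
    a • sub_smul_involution_proj_eq_of_walk_eq hS hx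

end Involution

variable (hde : Function.RightInverse e d)
include hde

theorem map_liftMap {u : W} (hu : discriminant d e S u = u) :
    d (liftMap e S a b u) = (a + b) • u := by
  rw [liftMap_apply, map_add, map_smul, map_smul, hde, ← discriminant_apply, hu]
  module

variable (hS : Function.Involutive S)
include hS

theorem walk_liftMap {u : W} (hu : discriminant d e S u = u) :
    walk d e S a b (liftMap e S a b u) = a • liftMap e S a b u := by
  rw [walk_apply, coin_apply, map_liftMap hde hu, map_smul]
  simp only [liftMap_apply]
  have h : a • (a + b) • e u + b • ((b • e u + a • S (e u)) - (a + b) • e u) =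
      a • (a • e u + b • S (e u)) := by module
  rw [h, map_smul, map_add, map_smul, map_smul, hS]
  module

theorem map_involution_eq_of_walk_eq (ha : a ≠ 0) {x : V} (hx : walk d e S a b x = a • x) :
    d (S x) = d x := by
  have h := congr(d $(sub_smul_proj_eq_of_walk_eq hS hx))
  simp only [map_smul, map_sub, hde (d x)] at h
  refine smul_right_injective W ha ?_
  linear_combination (norm := module) -h

theorem discriminant_map_eq_of_walk_eq (ha : a ≠ 0) (hab : a ≠ b) {x : V}
    (hx : walk d e S a b x = a • x) : discriminant d e S (d x) = d x := by
  rw [discriminant_apply]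
  have h := congr(d $(sub_smul_involution_proj_eq_of_walk_eq hS hx))
  simp only [map_smul, map_sub, map_involution_eq_of_walk_eq hde hS ha hx] at h
  refine smul_right_injective W (sub_ne_zero.mpr hab) ?_
  linear_combination (norm := module) h

def kerWalkEquiv (ha : a ≠ 0) (hab : a ≠ b) (hab' : a + b ≠ 0) :
    ker (walk d e S a b - a • 1) ≃ₗ[𝕜] ker (discriminant d e S - 1) where
  toLinearMap := d.restrict fun x hx => mem_ker_sub_one.mpr <|
    discriminant_map_eq_of_walk_eq hde hS ha hab (mem_ker_sub_smul_one.mp hx)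
  invFun u := ⟨(a + b)⁻¹ • liftMap e S a b u, Submodule.smul_mem _ _ <|
    mem_ker_sub_smul_one.mpr (walk_liftMap hde hS (mem_ker_sub_one.mp u.2))⟩
  left_inv x := Subtype.ext <| show (a + b)⁻¹ • liftMap e S a b (d x) = x by
    rw [liftMap_map_eq_of_walk_eq hS hab (mem_ker_sub_smul_one.mp x.2), inv_smul_smul₀ hab']
  right_inv u := Subtype.ext <| show d ((a + b)⁻¹ • liftMap e S a b u) = u by
    rw [map_smul, map_liftMap hde (mem_ker_sub_one.mp u.2), inv_smul_smul₀ hab']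

theorem lift_rank_ker_walk_sub_smul (ha : a ≠ 0) (hab : a ≠ b) (hab' : a + b ≠ 0) :
    Cardinal.lift.{v} (Module.rank 𝕜 (ker (walk d e S a b - a • 1))) =
      Cardinal.lift.{u} (Module.rank 𝕜 (ker (discriminant d e S - 1))) :=
  (kerWalkEquiv hde hS ha hab hab').lift_rank_eq

theorem lift_rank_ker_walk_add_smul (ha : a ≠ 0) (hab : a ≠ b) (hab' : a + b ≠ 0) :
    Cardinal.lift.{v} (Module.rank 𝕜 (ker (walk d e S a b + a • 1))) =
      Cardinal.lift.{u} (Module.rank 𝕜 (ker (discriminant d e S + 1))) := by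
  have hS' : Function.Involutive (-S) := fun x => by
    simp only [LinearMap.neg_apply, map_neg, hS x, neg_neg]
  have h := lift_rank_ker_walk_sub_smul hde hS' ha hab hab'
  rwa [walk_neg, discriminant_neg, ← neg_add', ← neg_add', ker_neg, ker_neg] at h

end Field

section InnerProduct

variable {𝕜 V W : Type*} [RCLike 𝕜] [NormedAddCommGroup V] [InnerProductSpace 𝕜 V]
  [NormedAddCommGroup W] [InnerProductSpace 𝕜 W]
  {d : V →ₗ[𝕜] W} {e : W →ₗ[𝕜] V} {S : V →ₗ[𝕜] V} {a b : 𝕜}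
  (hde : Function.RightInverse e d) (hadj : ∀ w v, ⟪e w, v⟫_𝕜 = ⟪w, d v⟫_𝕜)
  (hS : S.IsSymmetric) (hS2 : Function.Involutive S)
include hde hadj hS hS2

theorem map_eq_zero_of_walk_eq_neg (hab : a ≠ b) (hab' : a + b ≠ 0) {x : V}
    (hx : walk d e S a b x = -b • x) : d x = 0 := by
  have hE := sub_smul_proj_eq_of_walk_eq hS2 hx
  have hSP : S (e (d x)) = e (d x) := by
    refine smul_right_injective V (sub_ne_zero.mpr hab) ?_
    linear_combination (norm := module) sub_smul_involution_proj_eq_of_walk_eq hS2 hx - hE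
  have h1 : ⟪e (d x), x⟫_𝕜 = ⟪d x, d x⟫_𝕜 := hadj _ _
  have h2 : ⟪e (d x), S x⟫_𝕜 = ⟪d x, d x⟫_𝕜 := by rw [← hS, hSP, h1]
  have h3 : ⟪e (d x), e (d x)⟫_𝕜 = ⟪d x, d x⟫_𝕜 := by rw [hadj, hde]
  have h := congr(⟪e (d x), $hE⟫_𝕜)
  rw [inner_smul_right, inner_sub_right, inner_smul_right, inner_smul_right, h1, h2, h3] at h
  have hnorm : (a + b) * ⟪d x, d x⟫_𝕜 = 0 := by linear_combination h
  exact inner_self_eq_zero.mp ((mul_eq_zero.mp hnorm).resolve_left hab')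

theorem ker_walk_add_smul (hb : b ≠ 0) (hab : a ≠ b) (hab' : a + b ≠ 0) :
    ker (walk d e S a b + b • 1) = ker d ⊓ ker (S + 1) := by
  ext x
  rw [Submodule.mem_inf, mem_ker_add_smul_one, mem_ker_add_one, mem_ker]
  constructor
  · intro hx
    have hdx := map_eq_zero_of_walk_eq_neg hde hadj hS hS2 hab hab' hx
    have hE := sub_smul_proj_eq_of_walk_eq hS2 hx
    rw [hdx, map_zero, smul_zero] at hE
    refine ⟨hdx, smul_right_injective V hb ?_⟩
    linear_combination (norm := module) hE
  · rintro ⟨hdx, hSx⟩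
    rw [walk_apply, coin_apply, hdx, map_zero, smul_zero, zero_add, sub_zero, map_smul, hSx,
      smul_neg, neg_smul]

theorem ker_walk_sub_smul (hb : b ≠ 0) (hab : a ≠ b) (hab' : a + b ≠ 0) :
    ker (walk d e S a b - b • 1) = ker d ⊓ ker (S - 1) := by
  have hS' : (-S).IsSymmetric := fun x y => by
    simp only [LinearMap.neg_apply, inner_neg_left, inner_neg_right, hS x y]
  have hS2' : Function.Involutive (-S) := fun x => by
    simp only [LinearMap.neg_apply, map_neg, hS2 x, neg_neg]
  have h := ker_walk_add_smul hde hadj hS' hS2' hb hab hab'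
  rw [walk_neg, neg_add_eq_sub, neg_add_eq_sub] at h
  rwa [← ker_neg (walk d e S a b - b • 1), neg_sub, ← ker_neg (S - 1), neg_sub]

end InnerProduct

end QuantumWalk

open ContinuousLinearMap QuantumWalk

theorem stmt_15_general {H : Type u_1} {K : Type u_2}
    [NormedAddCommGroup H] [InnerProductSpace ℂ H] [CompleteSpace H]
    [NormedAddCommGroup K] [InnerProductSpace ℂ K] [CompleteSpace K]
    (a b : ℝ)
    (d : H →L[ℂ] K) (hd : d ∘L (adjoint d) = 1)
    (S : H →L[ℂ] H) (hS : IsSelfAdjoint S) (hS2 : S ∘L S = 1)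
    (C : H →L[ℂ] H)
    (hC : C = (a : ℂ) • ((adjoint d) ∘L d) + (b : ℂ) • (1 - (adjoint d) ∘L d))
    (U : H →L[ℂ] H) (hU : U = S ∘L C)
    (T : K →L[ℂ] K) (hT : T = d ∘L S ∘L (adjoint d))
    (h4 : a ≠ b) (h5 : a ≠ -b) (h6 : a * b ≠ 0) :
    Cardinal.lift.{u_2}
        (Module.rank ℂ (LinearMap.ker ((U - (a : ℂ) • (1 : H →L[ℂ] H) : H →L[ℂ] H) : H →ₗ[ℂ] H))) =
      Cardinal.lift.{u_1}
        (Module.rank ℂ (LinearMap.ker ((T - (1 : K →L[ℂ] K) : K →L[ℂ] K) : K →ₗ[ℂ] K))) ∧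
    Cardinal.lift.{u_2}
        (Module.rank ℂ (LinearMap.ker ((U + (a : ℂ) • (1 : H →L[ℂ] H) : H →L[ℂ] H) : H →ₗ[ℂ] H))) =
      Cardinal.lift.{u_1}
        (Module.rank ℂ (LinearMap.ker ((T + (1 : K →L[ℂ] K) : K →L[ℂ] K) : K →ₗ[ℂ] K))) ∧
    Module.rank ℂ (LinearMap.ker ((U + (b : ℂ) • (1 : H →L[ℂ] H) : H →L[ℂ] H) : H →ₗ[ℂ] H)) =
      Module.rank ℂ (LinearMap.ker (d : H →ₗ[ℂ] K) ⊓ LinearMap.ker ((S + 1 : H →L[ℂ] H) : H →ₗ[ℂ] H) : Submodule ℂ H) ∧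
    Module.rank ℂ (LinearMap.ker ((U - (b : ℂ) • (1 : H →L[ℂ] H) : H →L[ℂ] H) : H →ₗ[ℂ] H)) =
      Module.rank ℂ (LinearMap.ker (d : H →ₗ[ℂ] K) ⊓ LinearMap.ker ((S - 1 : H →L[ℂ] H) : H →ₗ[ℂ] H) : Submodule ℂ H) := by
  subst hU hC hT
  have ha : (a : ℂ) ≠ 0 := Complex.ofReal_ne_zero.mpr (left_ne_zero_of_mul h6)
  have hb : (b : ℂ) ≠ 0 := Complex.ofReal_ne_zero.mpr (right_ne_zero_of_mul h6)
  have hab : (a : ℂ) ≠ b := Complex.ofReal_injective.ne h4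
  have hab' : (a : ℂ) + b ≠ 0 := by exact_mod_cast (add_eq_zero_iff_eq_neg.not.mpr h5)
  have hde : Function.RightInverse (adjoint d) d := fun w => congr($hd w)
  have hSinv : Function.Involutive S := fun x => congr($hS2 x)
  have hadj := fun w x => adjoint_inner_left d x w
  -- The coerced operators are definitionally `walk ↑d ↑(adjoint d) ↑S a b` and
  -- `discriminant ↑d ↑(adjoint d) ↑S`.
  exact ⟨lift_rank_ker_walk_sub_smul hde hSinv ha hab hab',
    lift_rank_ker_walk_add_smul hde hSinv ha hab hab',
    congrArg (fun p : Submodule ℂ H => Module.rank ℂ p)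
      (ker_walk_add_smul hde hadj hS.isSymmetric hSinv hb hab hab'),
    congrArg (fun p : Submodule ℂ H => Module.rank ℂ p)
      (ker_walk_sub_smul hde hadj hS.isSymmetric hSinv hb hab hab')⟩

/-- Under the standing assumptions (as cardinals):
`dim ker(U − a) = dim ker(T − 1)`, `dim ker(U + a) = dim ker(T + 1)`,
`dim ker(U + b) = dim(ker d ⊓ ker(S + 1))`,
`dim ker(U − b) = dim(ker d ⊓ ker(S − 1))`. -/
theorem stmt_15 {H : Type u_1} {K : Type u_2}
    [NormedAddCommGroup H] [InnerProductSpace ℂ H] [CompleteSpace H] [Nontrivial H]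
    [NormedAddCommGroup K] [InnerProductSpace ℂ K] [CompleteSpace K] [Nontrivial K]
    (a b : ℝ)
    (d : H →L[ℂ] K) (hd : d ∘L (adjoint d) = 1)
    (S : H →L[ℂ] H) (hS : IsSelfAdjoint S) (hS2 : S ∘L S = 1)
    (C : H →L[ℂ] H)
    (hC : C = (a : ℂ) • ((adjoint d) ∘L d) + (b : ℂ) • (1 - (adjoint d) ∘L d))
    (U : H →L[ℂ] H) (hU : U = S ∘L C)
    (T : K →L[ℂ] K) (hT : T = d ∘L S ∘L (adjoint d))
    (h1 : (adjoint d) ∘L d ≠ 1) (h2 : S ≠ 1) (h3 : S ≠ -1)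
    (h4 : a ≠ b) (h5 : a ≠ -b) (h6 : a * b ≠ 0) :
    Cardinal.lift.{u_2}
        (Module.rank ℂ (LinearMap.ker ((U - (a : ℂ) • (1 : H →L[ℂ] H) : H →L[ℂ] H) : H →ₗ[ℂ] H))) =
      Cardinal.lift.{u_1}
        (Module.rank ℂ (LinearMap.ker ((T - (1 : K →L[ℂ] K) : K →L[ℂ] K) : K →ₗ[ℂ] K))) ∧
    Cardinal.lift.{u_2}
        (Module.rank ℂ (LinearMap.ker ((U + (a : ℂ) • (1 : H →L[ℂ] H) : H →L[ℂ] H) : H →ₗ[ℂ] H))) =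
      Cardinal.lift.{u_1}
        (Module.rank ℂ (LinearMap.ker ((T + (1 : K →L[ℂ] K) : K →L[ℂ] K) : K →ₗ[ℂ] K))) ∧
    Module.rank ℂ (LinearMap.ker ((U + (b : ℂ) • (1 : H →L[ℂ] H) : H →L[ℂ] H) : H →ₗ[ℂ] H)) =
      Module.rank ℂ (LinearMap.ker (d : H →ₗ[ℂ] K) ⊓ LinearMap.ker ((S + 1 : H →L[ℂ] H) : H →ₗ[ℂ] H) : Submodule ℂ H) ∧
    Module.rank ℂ (LinearMap.ker ((U - (b : ℂ) • (1 : H →L[ℂ] H) : H →L[ℂ] H) : H →ₗ[ℂ] H)) =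
      Module.rank ℂ (LinearMap.ker (d : H →ₗ[ℂ] K) ⊓ LinearMap.ker ((S - 1 : H →L[ℂ] H) : H →ₗ[ℂ] H) : Submodule ℂ H) :=
  stmt_15_general a b d hd S hS hS2 C hC U hU T hT h4 h5 h6
end

section
/- Assume the standing assumptions. For every λ ∈ ℂ with λ ∉ {a, −a, b, −b}: λ belongs to the continuous spectrum of U if and only if λ ≠ 0 and φ_{a,b}(λ) belongs to the continuous spectrum of T. Equivalently, σ_c(U) \ {a, −a, b, −b} = φ_{a,b}⁻¹( σ_c(T) \ {1, −1} ). -/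
/-!
If `T y = μ y`, then `U` preserves the span of `d* y` and `S d* y`, acting there by the matrix
`[[0, b], [a, (a − b) μ]]`, whose characteristic equation `λ² − (a − b) μ λ − a b = 0` says
`μ = φ_{a,b}(λ)`. Accordingly, for `λ ≠ 0` and `λ² ≠ b²` the identities

* `λ d (U − λ) + b d S (U − λ) = λ (a − b) (T − μ) d`,
* `(U − λ) (λ S + b) d* = λ (a − b) S d* (T − μ)`,
* `(U − λ) (b S + λ) = (a − b) S d* d (b S + λ) + b² − λ²`

transport kernels and ranges between `U − λ` and `T − μ` in both directions. As `U* = S U S`,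
`T* = T` and `φ_{a,b}(λ̄) = conj φ_{a,b}(λ)`, the same goes for the kernels of `U* − λ̄` and
`T* − μ̄`, which decide whether the ranges are dense. Finally `U` is invertible, and
`φ_{a,b}(λ) = ±1` exactly when `λ ∈ {±a, ±b}`.
-/

open ContinuousLinearMap

/-- `λ` belongs to the continuous spectrum of `A`: `A − λ` is injective, has dense
range, but is not surjective. -/
def ContSpec {E : Type*} [NormedAddCommGroup E] [NormedSpace ℂ E]
    (A : E →L[ℂ] E) (lam : ℂ) : Prop :=
  Function.Injective ⇑(A - lam • (1 : E →L[ℂ] E)) ∧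
  DenseRange ⇑(A - lam • (1 : E →L[ℂ] E)) ∧
  ¬ Function.Surjective ⇑(A - lam • (1 : E →L[ℂ] E))

section LinearAlgebra

variable {𝕜 H K : Type*} [Field 𝕜] [AddCommGroup H] [Module 𝕜 H] [AddCommGroup K] [Module 𝕜 K]

theorem eq_zero_of_smul_eq_smul_apply_of_involutive {S : Module.End 𝕜 H} (hS : ∀ x, S (S x) = x)
    {l c : 𝕜} (hlc : l ^ 2 ≠ c ^ 2) {x : H} (hx : l • x = c • S x) : x = 0 := by
  have hSx : l • S x = c • x := by simpa only [map_smul, hS] using congrArg S hx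
  have h : (l ^ 2 - c ^ 2) • x = 0 := by linear_combination (norm := module) l • hx + c • hSx
  exact (smul_eq_zero.mp h).resolve_left (sub_ne_zero.mpr hlc)

/-- `U = S (a P + b (1 - P))` and `T = d S e` for the idempotent `P = e d`, where `e` is any right
inverse of `d` (in the Hilbert space setting `e = d*`). -/
structure IsQuantumWalk (a b : 𝕜) (d : H →ₗ[𝕜] K) (e : K →ₗ[𝕜] H) (S U : Module.End 𝕜 H)
    (T : Module.End 𝕜 K) : Prop where
  d_e : ∀ y, d (e y) = y
  S_S : ∀ x, S (S x) = x
  U_apply : ∀ x, U x = (a - b) • S (e (d x)) + b • S x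
  T_apply : ∀ y, T y = d (S (e y))

namespace IsQuantumWalk

variable {a b l m : 𝕜} {d : H →ₗ[𝕜] K} {e : K →ₗ[𝕜] H} {S U : Module.End 𝕜 H}
  {T : Module.End 𝕜 K}

theorem surjective (hW : IsQuantumWalk a b d e S U T) (ha : a ≠ 0) (hb : b ≠ 0) :
    Function.Surjective U := by
  intro z
  refine ⟨b⁻¹ • S z + (a⁻¹ - b⁻¹) • e (d (S z)), ?_⟩
  simp only [hW.U_apply, map_add, map_smul, hW.d_e, hW.S_S]
  match_scalars <;> field_simp
  ring

theorem smul_d_add_smul_d_S (hW : IsQuantumWalk a b d e S U T)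
    (hm : (a - b) * l * m = l ^ 2 - a * b) (x : H) :
    l • d (U x - l • x) + b • d (S (U x - l • x)) = (l * (a - b)) • (T (d x) - m • d x) := by
  simp only [map_sub, map_add, map_smul, hW.U_apply, hW.S_S, hW.d_e, ← hW.T_apply]
  linear_combination (norm := module) hm • d x

theorem apply_sub_smul_lift (hW : IsQuantumWalk a b d e S U T)
    (hm : (a - b) * l * m = l ^ 2 - a * b) (y : K) :
    U (l • S (e y) + b • e y) - l • (l • S (e y) + b • e y) =
      (l * (a - b)) • S (e (T y - m • y)) := by
  simp only [map_sub, map_add, map_smul, hW.U_apply, hW.S_S, hW.d_e, ← hW.T_apply]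
  linear_combination (norm := module) hm • S (e y)

theorem apply_sub_smul_smul_S_add (hW : IsQuantumWalk a b d e S U T) (v : H) :
    U (b • S v + l • v) - l • (b • S v + l • v) =
      (a - b) • S (e (d (b • S v + l • v))) + (b ^ 2 - l ^ 2) • v := by
  rw [hW.U_apply, map_add S, map_smul, map_smul, hW.S_S]
  module

theorem injective_sub_smul_iff (hW : IsQuantumWalk a b d e S U T) (hl : l * (a - b) ≠ 0)
    (hlb : l ^ 2 ≠ b ^ 2) (hm : (a - b) * l * m = l ^ 2 - a * b) :
    Function.Injective ⇑(U - l • 1) ↔ Function.Injective ⇑(T - m • 1) := by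
  simp only [injective_iff_map_eq_zero, LinearMap.sub_apply, LinearMap.smul_apply,
    Module.End.one_apply]
  constructor
  · intro hU y hy
    have hlift := hU _ (by rw [hW.apply_sub_smul_lift hm, hy, map_zero, map_zero, smul_zero])
    have hSe : S (e y) = 0 := by
      refine eq_zero_of_smul_eq_smul_apply_of_involutive hW.S_S (l := l) (c := -b)
        (by rwa [neg_sq]) ?_
      rw [hW.S_S]
      linear_combination (norm := module) hlift
    rw [← hW.d_e y, ← hW.S_S (e y), hSe, map_zero, map_zero]
  · intro hT x hx
    have hdx : d x = 0 := by
      refine hT _ ((smul_eq_zero.mp ?_).resolve_left hl)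
      rw [← hW.smul_d_add_smul_d_S hm, hx]
      simp only [map_zero, smul_zero, add_zero]
    refine eq_zero_of_smul_eq_smul_apply_of_involutive hW.S_S hlb ?_
    rw [← sub_eq_zero.mp hx, hW.U_apply, hdx, map_zero, map_zero, smul_zero, zero_add]

theorem surjective_sub_smul_iff (hW : IsQuantumWalk a b d e S U T) (hl : l * (a - b) ≠ 0)
    (hlb : l ^ 2 ≠ b ^ 2) (hm : (a - b) * l * m = l ^ 2 - a * b) :
    Function.Surjective ⇑(U - l • 1) ↔ Function.Surjective ⇑(T - m • 1) := by
  simp only [Function.Surjective, LinearMap.sub_apply, LinearMap.smul_apply,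
    Module.End.one_apply]
  have hl0 : l ≠ 0 := left_ne_zero_of_mul hl
  constructor
  · intro hU y
    obtain ⟨x, hx⟩ := hU (l • e y - b • S (e y))
    have h := hW.smul_d_add_smul_d_S hm x
    simp only [hx, map_sub, map_smul, hW.d_e, hW.S_S, ← hW.T_apply] at h
    refine ⟨((l ^ 2 - b ^ 2)⁻¹ * (l * (a - b))) • d x, ?_⟩
    rw [map_smul, smul_comm m, ← smul_sub, mul_smul, ← h]
    match_scalars <;> field_simp <;> ring
  · intro hT z
    set v := (b ^ 2 - l ^ 2)⁻¹ • z
    obtain ⟨y, hy⟩ := hT (l⁻¹ • d (b • S v + l • v))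
    refine ⟨(b • S v + l • v) - (l • S (e y) + b • e y), ?_⟩
    rw [map_sub, smul_sub, sub_sub_sub_comm, hW.apply_sub_smul_smul_S_add,
      hW.apply_sub_smul_lift hm, hy]
    generalize d (b • S v + l • v) = w
    simp only [v, map_smul, smul_smul]
    match_scalars <;> field_simp
    ring

end IsQuantumWalk

end LinearAlgebra

noncomputable def joukowsky (a b : ℝ) (z : ℂ) : ℂ :=
  (z - (a * b : ℝ) * z⁻¹) / ((a : ℂ) - (b : ℝ))

section Joukowsky

variable {a b : ℝ} {z : ℂ}

theorem sub_mul_mul_joukowsky (hab : a ≠ b) (hz : z ≠ 0) :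
    ((a : ℂ) - b) * z * joukowsky a b z = z ^ 2 - a * b := by
  have : (a : ℂ) - b ≠ 0 := sub_ne_zero.mpr (by exact_mod_cast hab)
  rw [joukowsky]
  push_cast
  field_simp

theorem joukowsky_star (a b : ℝ) (z : ℂ) : joukowsky a b (star z) = star (joukowsky a b z) := by
  simp [joukowsky, Complex.conj_ofReal]

theorem joukowsky_mem_iff (hab : a ≠ b) (hz : z ≠ 0) :
    joukowsky a b z ∈ ({1, -1} : Set ℂ) ↔
      z ∈ ({(a : ℂ), -(a : ℂ), (b : ℂ), -(b : ℂ)} : Set ℂ) := by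
  have hab' : (a : ℂ) - b ≠ 0 := sub_ne_zero.mpr (by exact_mod_cast hab)
  have h := sub_mul_mul_joukowsky hab hz
  have hone : joukowsky a b z = 1 ↔ (z - a) * (z + b) = 0 := by
    rw [← mul_right_inj' (mul_ne_zero hab' hz), h]
    constructor <;> intro h' <;> linear_combination h'
  have hneg : joukowsky a b z = -1 ↔ (z + a) * (z - b) = 0 := by
    rw [← mul_right_inj' (mul_ne_zero hab' hz), h]
    constructor <;> intro h' <;> linear_combination h'
  simp only [Set.mem_insert_iff, Set.mem_singleton_iff, hone, hneg, mul_eq_zero, sub_eq_zero,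
    add_eq_zero_iff_eq_neg]
  tauto

end Joukowsky

theorem injective_conj_sub_smul_iff {𝕜 E : Type*} [NontriviallyNormedField 𝕜]
    [NormedAddCommGroup E] [NormedSpace 𝕜 E] {S : E →L[𝕜] E} (hS : ∀ x, S (S x) = x)
    (A : E →L[𝕜] E) (c : 𝕜) :
    Function.Injective ⇑(S ∘L A ∘L S - c • 1) ↔ Function.Injective ⇑(A - c • 1) := by
  have h : S ∘L A ∘L S - c • 1 = S ∘L (A - c • 1) ∘L S := by
    ext x
    simp [hS]
  have hS' : Function.Involutive S := hS
  rw [h, coe_comp, coe_comp, ← hS'.coe_toPerm, Equiv.comp_injective, Equiv.injective_comp]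

theorem IsSelfAdjoint.ofReal_smul_add_ofReal_smul_one_sub {A : Type*} [Ring A] [StarRing A]
    [Module ℂ A] [StarModule ℂ A] {P : A} (hP : IsSelfAdjoint P) (a b : ℝ) :
    IsSelfAdjoint ((a : ℂ) • P + (b : ℂ) • (1 - P)) :=
  (IsSelfAdjoint.smul (Complex.conj_ofReal a) hP).add
    (IsSelfAdjoint.smul (Complex.conj_ofReal b) ((IsSelfAdjoint.one A).sub hP))

section Hilbert

variable {H K : Type*} [NormedAddCommGroup H] [InnerProductSpace ℂ H] [CompleteSpace H]
  [NormedAddCommGroup K] [InnerProductSpace ℂ K] [CompleteSpace K]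

theorem denseRange_iff_injective_adjoint (f : H →L[ℂ] K) :
    DenseRange f ↔ Function.Injective (adjoint f) := by
  rw [← coe_coe (adjoint f), ← LinearMap.ker_eq_bot, ← orthogonal_range,
    ← Submodule.topologicalClosure_eq_top_iff, ← Submodule.dense_iff_topologicalClosure_eq_top]
  rfl

theorem contSpec_iff (A : H →L[ℂ] H) (l : ℂ) :
    ContSpec A l ↔ Function.Injective ⇑(A - l • 1) ∧
      Function.Injective ⇑(adjoint A - star l • 1) ∧ ¬ Function.Surjective ⇑(A - l • 1) := by
  rw [ContSpec, denseRange_iff_injective_adjoint, ← star_eq_adjoint, star_sub, star_smul,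
    star_one, star_eq_adjoint]

theorem adjoint_comp_eq_conj {S C : H →L[ℂ] H} (hS : IsSelfAdjoint S) (hS2 : ∀ x, S (S x) = x)
    (hC : IsSelfAdjoint C) : adjoint (S ∘L C) = S ∘L (S ∘L C) ∘L S := by
  ext x
  simp [adjoint_comp, hS.adjoint_eq, hC.adjoint_eq, hS2]

namespace IsQuantumWalk

variable {d : H →L[ℂ] K} {S : H →L[ℂ] H}

theorem of_coisometry (hd : d ∘L adjoint d = 1) (hS : S ∘L S = 1) (a b : ℝ) :
    IsQuantumWalk (a : ℂ) b (d : H →ₗ[ℂ] K) (adjoint d : K →ₗ[ℂ] H) (S : H →ₗ[ℂ] H)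
      (S ∘L ((a : ℂ) • (adjoint d ∘L d) + (b : ℂ) • (1 - adjoint d ∘L d)))
      (d ∘L S ∘L adjoint d) where
  d_e y := DFunLike.congr_fun hd y
  S_S x := DFunLike.congr_fun hS x
  U_apply x := by
    simp only [coe_coe, comp_apply, add_apply, smul_apply, sub_apply, one_apply_eq_self,
      map_add, map_smul, map_sub]
    module
  T_apply _ := rfl

variable {a b : ℝ} {U : H →L[ℂ] H} {T : K →L[ℂ] K}

theorem contSpec_iff_contSpec_joukowsky
    (hW : IsQuantumWalk (a : ℂ) b (d : H →ₗ[ℂ] K) (adjoint d : K →ₗ[ℂ] H) (S : H →ₗ[ℂ] H) U T)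
    (hU : adjoint U = S ∘L U ∘L S) (hT : IsSelfAdjoint T) (hab : a ≠ b) {z : ℂ} (hz : z ≠ 0)
    (hzb : z ^ 2 ≠ b ^ 2) :
    ContSpec U z ↔ ContSpec T (joukowsky a b z) := by
  have hab' : (a : ℂ) - b ≠ 0 := sub_ne_zero.mpr (by exact_mod_cast hab)
  have hz' : star z ≠ 0 := star_ne_zero.mpr hz
  have hzb' : star z ^ 2 ≠ (b : ℂ) ^ 2 := by
    intro h
    apply hzb
    simpa [← star_pow, Complex.conj_ofReal] using congrArg star h
  rw [contSpec_iff, contSpec_iff, hU, hT.adjoint_eq, injective_conj_sub_smul_iff hW.S_S,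
    ← joukowsky_star]
  exact and_congr
    (hW.injective_sub_smul_iff (mul_ne_zero hz hab') hzb (sub_mul_mul_joukowsky hab hz))
    (and_congr
      (hW.injective_sub_smul_iff (mul_ne_zero hz' hab') hzb' (sub_mul_mul_joukowsky hab hz'))
      (not_congr
        (hW.surjective_sub_smul_iff (mul_ne_zero hz hab') hzb (sub_mul_mul_joukowsky hab hz))))

theorem not_contSpec_zero
    (hW : IsQuantumWalk (a : ℂ) b (d : H →ₗ[ℂ] K) (adjoint d : K →ₗ[ℂ] H) (S : H →ₗ[ℂ] H) U T)
    (hab : a * b ≠ 0) : ¬ ContSpec U 0 := fun h => h.2.2 <| by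
  simpa using hW.surjective (by exact_mod_cast left_ne_zero_of_mul hab)
    (by exact_mod_cast right_ne_zero_of_mul hab)

theorem contSpec_iff_ne_zero_and
    (hW : IsQuantumWalk (a : ℂ) b (d : H →ₗ[ℂ] K) (adjoint d : K →ₗ[ℂ] H) (S : H →ₗ[ℂ] H) U T)
    (hU : adjoint U = S ∘L U ∘L S) (hT : IsSelfAdjoint T) (hab : a ≠ b) (hab0 : a * b ≠ 0)
    {z : ℂ} (hzab : z ∉ ({(a : ℂ), -(a : ℂ), (b : ℂ), -(b : ℂ)} : Set ℂ)) :
    ContSpec U z ↔ z ≠ 0 ∧ ContSpec T (joukowsky a b z) := by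
  by_cases hz : z = 0
  · simp [hz, hW.not_contSpec_zero hab0]
  have hzb : z ^ 2 ≠ (b : ℂ) ^ 2 := by
    simp only [Set.mem_insert_iff, Set.mem_singleton_iff, not_or] at hzab
    rw [Ne, sq_eq_sq_iff_eq_or_eq_neg]
    tauto
  rw [hW.contSpec_iff_contSpec_joukowsky hU hT hab hz hzb, and_iff_right hz]

theorem contSpec_sdiff_eq
    (hW : IsQuantumWalk (a : ℂ) b (d : H →ₗ[ℂ] K) (adjoint d : K →ₗ[ℂ] H) (S : H →ₗ[ℂ] H) U T)
    (hU : adjoint U = S ∘L U ∘L S) (hT : IsSelfAdjoint T) (hab : a ≠ b) (hab0 : a * b ≠ 0) :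
    {z : ℂ | ContSpec U z} \ {(a : ℂ), -(a : ℂ), (b : ℂ), -(b : ℂ)} =
      {z : ℂ | z ≠ 0 ∧ joukowsky a b z ∈ {μ : ℂ | ContSpec T μ} \ {1, -1}} := by
  ext z
  simp only [Set.mem_sdiff, Set.mem_ofPred_eq]
  by_cases hz : z = 0
  · simp [hz, hW.not_contSpec_zero hab0]
  have hQ := joukowsky_mem_iff hab hz
  constructor
  · rintro ⟨hUz, hzab⟩
    exact ⟨hz, ((hW.contSpec_iff_ne_zero_and hU hT hab hab0 hzab).mp hUz).2, mt hQ.mp hzab⟩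
  · rintro ⟨-, hTz, hj⟩
    have hzab := mt hQ.mpr hj
    exact ⟨(hW.contSpec_iff_ne_zero_and hU hT hab hab0 hzab).mpr ⟨hz, hTz⟩, hzab⟩

end IsQuantumWalk

end Hilbert

theorem stmt_16_general {H K : Type*}
    [NormedAddCommGroup H] [InnerProductSpace ℂ H] [CompleteSpace H]
    [NormedAddCommGroup K] [InnerProductSpace ℂ K] [CompleteSpace K]
    (a b : ℝ)
    (d : H →L[ℂ] K) (hd : d ∘L (adjoint d) = 1)
    (S : H →L[ℂ] H) (hS : IsSelfAdjoint S) (hS2 : S ∘L S = 1)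
    (C : H →L[ℂ] H)
    (hC : C = (a : ℂ) • ((adjoint d) ∘L d) + (b : ℂ) • (1 - (adjoint d) ∘L d))
    (U : H →L[ℂ] H) (hU : U = S ∘L C)
    (T : K →L[ℂ] K) (hT : T = d ∘L S ∘L (adjoint d))
    (h4 : a ≠ b) (h6 : a * b ≠ 0) :
    (∀ lam : ℂ, lam ∉ ({(a : ℂ), -(a : ℂ), (b : ℂ), -(b : ℂ)} : Set ℂ) →
      (ContSpec U lam ↔ lam ≠ 0 ∧
        ContSpec T ((lam - (a * b : ℝ) * lam⁻¹) / ((a : ℂ) - (b : ℝ))))) ∧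
    {lam : ℂ | ContSpec U lam} \ {(a : ℂ), -(a : ℂ), (b : ℂ), -(b : ℂ)} =
      {lam : ℂ | lam ≠ 0 ∧
        ((lam - (a * b : ℝ) * lam⁻¹) / ((a : ℂ) - (b : ℝ))) ∈
          {μ : ℂ | ContSpec T μ} \ {1, -1}} := by
  subst hC hU hT
  have hW := IsQuantumWalk.of_coisometry hd hS2 a b
  have hUadj := adjoint_comp_eq_conj hS hW.S_S
    ((isPositive_adjoint_comp_self d).isSelfAdjoint.ofReal_smul_add_ofReal_smul_one_sub a b)
  have hTsa := hS.conj_adjoint d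
  exact ⟨fun z hz => hW.contSpec_iff_ne_zero_and hUadj hTsa h4 h6 hz,
    hW.contSpec_sdiff_eq hUadj hTsa h4 h6⟩

/-- Under the standing assumptions, for every `λ ∉ {a, −a, b, −b}`:
`λ ∈ σ_c(U)` iff `λ ≠ 0` and `φ_{a,b}(λ) ∈ σ_c(T)`. Equivalently,
`σ_c(U) \ {a, −a, b, −b} = φ_{a,b}⁻¹(σ_c(T) \ {1, −1})`. -/
theorem stmt_16 {H K : Type*}
    [NormedAddCommGroup H] [InnerProductSpace ℂ H] [CompleteSpace H] [Nontrivial H]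
    [NormedAddCommGroup K] [InnerProductSpace ℂ K] [CompleteSpace K] [Nontrivial K]
    (a b : ℝ)
    (d : H →L[ℂ] K) (hd : d ∘L (adjoint d) = 1)
    (S : H →L[ℂ] H) (hS : IsSelfAdjoint S) (hS2 : S ∘L S = 1)
    (C : H →L[ℂ] H)
    (hC : C = (a : ℂ) • ((adjoint d) ∘L d) + (b : ℂ) • (1 - (adjoint d) ∘L d))
    (U : H →L[ℂ] H) (hU : U = S ∘L C)
    (T : K →L[ℂ] K) (hT : T = d ∘L S ∘L (adjoint d))
    (h1 : (adjoint d) ∘L d ≠ 1) (h2 : S ≠ 1) (h3 : S ≠ -1)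
    (h4 : a ≠ b) (h5 : a ≠ -b) (h6 : a * b ≠ 0) :
    (∀ lam : ℂ, lam ∉ ({(a : ℂ), -(a : ℂ), (b : ℂ), -(b : ℂ)} : Set ℂ) →
      (ContSpec U lam ↔ lam ≠ 0 ∧
        ContSpec T ((lam - (a * b : ℝ) * lam⁻¹) / ((a : ℂ) - (b : ℝ))))) ∧
    {lam : ℂ | ContSpec U lam} \ {(a : ℂ), -(a : ℂ), (b : ℂ), -(b : ℂ)} =
      {lam : ℂ | lam ≠ 0 ∧
        ((lam - (a * b : ℝ) * lam⁻¹) / ((a : ℂ) - (b : ℝ))) ∈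
          {μ : ℂ | ContSpec T μ} \ {1, -1}} :=
  stmt_16_general a b d hd S hS hS2 C hC U hU T hT h4 h6
end
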